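/- Let d ≥ 3 and let Ω be a nonempty bounded open subset of ℝ^d. Let a, b ∈ ℝ^d, λ ∈ ℝ, and let A : ℝ^d → ℝ^d be a linear map that is skew-symmetric (⟨A x, y⟩ = −⟨x, A y⟩ for all x, y). Define the conformal Killing field φ : ℝ^d → ℝ^d by φ(x) = a + λ x + A x + 2⟨b, x⟩ x − ‖x‖² b. If φ(x) = 0 for every x in the frontier (topological boundary) of Ω, then φ(x) = 0 for every x ∈ ℝ^d. -/

import Mathlib

/-!
Since `Ω` is bounded, every line through a point `x₀ ∈ Ω` meets `∂Ω` on both sides of `x₀`, so a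
function that vanishes on `∂Ω` and is affine along that line has slope zero there. For a direction
`u ⊥ b` (available because `d ≥ 2`), `t ↦ ⟪φ (x₀ + t • u), u⟫` is affine with slope
`(λ + 2⟪b, x₀⟫) ‖u‖²`; hence `λ + 2⟪b, x⟫ = 0` on the open set `Ω`, which forces `b = 0` and
`λ = 0`. Then `φ x = a + A x` is affine along every line, so `A = 0`, and `a = φ p = 0` at any
boundary point `p`.
-/

open Filter Set Bornology Module
open scoped RealInnerProductSpace Topology

theorem IsPreconnected.inter_frontier_nonempty {X : Type*} [TopologicalSpace X] {s t : Set X}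
    (hs : IsPreconnected s) (hst : (s ∩ t).Nonempty) (hst' : (s \ t).Nonempty) :
    (s ∩ frontier t).Nonempty := by
  rw [frontier_eq_closure_inter_closure]
  refine isPreconnected_closed_iff.1 hs _ _ isClosed_closure isClosed_closure ?_
    (hst.mono (inter_subset_inter_right _ subset_closure))
    (hst'.mono (inter_subset_inter_right _ subset_closure))
  exact fun x _ => (em (x ∈ t)).imp (fun h => subset_closure h) (fun h => subset_closure h)

section Ray

variable {E : Type*} [NormedAddCommGroup E] [NormedSpace ℝ E] {Ω : Set E} {x₀ u : E}

theorem tendsto_add_smul_atTop_cobounded (x₀ : E) (hu : u ≠ 0) :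
    Tendsto (fun t : ℝ => x₀ + t • u) atTop (cobounded E) := by
  refine (tendsto_const_add_cobounded x₀).comp ?_
  rw [← tendsto_norm_atTop_iff_cobounded]
  simpa [norm_smul] using tendsto_abs_atTop_atTop.atTop_mul_const (norm_pos_iff.2 hu)

theorem exists_pos_add_smul_mem_frontier (hΩ : IsBounded Ω) (hx₀ : x₀ ∈ interior Ω)
    (hu : u ≠ 0) : ∃ t : ℝ, 0 < t ∧ x₀ + t • u ∈ frontier Ω := by
  obtain ⟨t, hΩt, ht⟩ : ∃ t : ℝ, x₀ + t • u ∉ Ω ∧ 0 ≤ t :=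
    (((tendsto_add_smul_atTop_cobounded x₀ hu).eventually hΩ).and
      (eventually_ge_atTop 0)).exists
  have hray : IsPreconnected ((fun t : ℝ => x₀ + t • u) '' Ici 0) :=
    isPreconnected_Ici.image _ (by fun_prop)
  obtain ⟨_, ⟨s, hs, rfl⟩, hsΩ⟩ := hray.inter_frontier_nonempty
    ⟨x₀, ⟨0, self_mem_Ici, by simp⟩, interior_subset hx₀⟩ ⟨_, ⟨t, ht, rfl⟩, hΩt⟩
  refine ⟨s, hs.lt_of_ne ?_, hsΩ⟩
  rintro rfl
  simp only [zero_smul, add_zero] at hsΩ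
  exact hsΩ.2 hx₀

theorem eq_zero_of_eqOn_frontier_of_apply_add_smul {M : Type*} [AddCommGroup M] [Module ℝ M]
    [Module.IsTorsionFree ℝ M] (hΩ : IsBounded Ω) (hx₀ : x₀ ∈ interior Ω) (hu : u ≠ 0)
    {f : E → M} (hf : EqOn f 0 (frontier Ω)) {c w : M}
    (hline : ∀ t : ℝ, f (x₀ + t • u) = c + t • w) : w = 0 := by
  obtain ⟨t, ht, hxt⟩ := exists_pos_add_smul_mem_frontier hΩ hx₀ hu
  obtain ⟨s, hs, hxs⟩ := exists_pos_add_smul_mem_frontier hΩ hx₀ (neg_ne_zero.2 hu)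
  have h₁ : c + t • w = 0 := (hline t).symm.trans (hf hxt)
  have h₂ : c + (-s) • w = 0 := by
    rw [← hline, neg_smul, ← smul_neg]
    exact hf hxs
  have : (t + s) • w = 0 := by
    rw [show (t + s) • w = (c + t • w) - (c + (-s) • w) by module, h₁, h₂, sub_zero]
  exact (smul_eq_zero_iff_right (by positivity)).1 this

end Ray

theorem exists_ne_zero_inner_eq_zero {𝕜 F : Type*} [RCLike 𝕜] [NormedAddCommGroup F]
    [InnerProductSpace 𝕜 F] [FiniteDimensional 𝕜 F] (hF : 2 ≤ finrank 𝕜 F) (b : F) :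
    ∃ u ≠ 0, inner 𝕜 b u = 0 := by
  have hK := Submodule.finrank_add_finrank_orthogonal (𝕜 ∙ b)
  have h1 : finrank 𝕜 (𝕜 ∙ b) ≤ 1 := (finrank_span_le_card ({b} : Set F)).trans (by simp)
  obtain ⟨u, hu, hu0⟩ := Submodule.exists_mem_ne_zero_of_ne_bot (p := (𝕜 ∙ b)ᗮ) (by
    intro h; rw [h, finrank_bot] at hK; omega)
  exact ⟨u, hu0, Submodule.mem_orthogonal_singleton_iff_inner_right.1 hu⟩

theorem eq_zero_of_forall_add_inner_eq_zero {F : Type*} [NormedAddCommGroup F]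
    [InnerProductSpace ℝ F] {Ω : Set F} (hΩ : IsOpen Ω) {x₀ : F} (hx₀ : x₀ ∈ Ω) {c : ℝ} {b : F}
    (h : ∀ x ∈ Ω, c + ⟪b, x⟫ = 0) : b = 0 ∧ c = 0 := by
  have hnear : ∀ᶠ t in 𝓝[≠] (0 : ℝ), x₀ + t • b ∈ Ω :=
    nhdsWithin_le_nhds <| (Continuous.tendsto' (by fun_prop) 0 x₀ (by simp)).eventually
      (hΩ.mem_nhds hx₀)
  obtain ⟨t, hxt, ht : t ≠ 0⟩ := (hnear.and self_mem_nhdsWithin).exists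
  have hb : t * ‖b‖ ^ 2 = 0 := by
    have := h _ hxt
    rw [inner_add_right, real_inner_smul_right, real_inner_self_eq_norm_sq] at this
    linarith [h x₀ hx₀]
  obtain rfl : b = 0 := by simpa [ht] using hb
  simpa using h x₀ hx₀

section ConformalKilling

variable {E : Type*} [NormedAddCommGroup E] [InnerProductSpace ℝ E]

def conformalKillingField (a b : E) (lam : ℝ) (A : E →ₗ[ℝ] E) (x : E) : E :=
  a + lam • x + A x + ((2 * ⟪b, x⟫) • x - ‖x‖ ^ 2 • b)

theorem inner_conformalKillingField_add_smul (a b : E) (lam : ℝ) (A : E →ₗ[ℝ] E) (x : E)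
    {u : E} (hAu : ⟪A u, u⟫ = 0) (hbu : ⟪b, u⟫ = 0) (t : ℝ) :
    ⟪conformalKillingField a b lam A (x + t • u), u⟫ =
      ⟪conformalKillingField a b lam A x, u⟫ + t * ((lam + 2 * ⟪b, x⟫) * ‖u‖ ^ 2) := by
  simp only [conformalKillingField, inner_add_left, inner_sub_left, real_inner_smul_left,
    map_add, map_smul, inner_add_right, real_inner_smul_right, hbu, hAu,
    real_inner_self_eq_norm_sq]
  ring

end ConformalKilling

theorem conformal_killing_rigidity
    (d : ℕ) (hd : 3 ≤ d)
    (Ω : Set (EuclideanSpace ℝ (Fin d)))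
    (hΩne : Ω.Nonempty) (hΩopen : IsOpen Ω) (hΩbdd : Bornology.IsBounded Ω)
    (a b : EuclideanSpace ℝ (Fin d)) (lam : ℝ)
    (A : EuclideanSpace ℝ (Fin d) →ₗ[ℝ] EuclideanSpace ℝ (Fin d))
    (hA : ∀ x y : EuclideanSpace ℝ (Fin d), (inner ℝ (A x) y : ℝ) = -(inner ℝ x (A y) : ℝ))
    (φ : EuclideanSpace ℝ (Fin d) → EuclideanSpace ℝ (Fin d))
    (hφ : ∀ x, φ x =
      a + lam • x + A x + ((2 * (inner ℝ b x : ℝ)) • x - (‖x‖ ^ 2) • b))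
    (hbdry : ∀ x ∈ frontier Ω, φ x = 0) :
    ∀ x, φ x = 0 := by
  obtain rfl : φ = conformalKillingField a b lam A := funext hφ
  obtain ⟨x₀, hx₀⟩ := hΩne
  rw [← hΩopen.interior_eq] at hx₀
  obtain ⟨u, hu, hbu⟩ :=
    exists_ne_zero_inner_eq_zero (by rw [finrank_euclideanSpace_fin]; omega) b
  have hAu : ⟪A u, u⟫ = 0 := by linarith [hA u u, real_inner_comm u (A u)]
  have hfactor : ∀ x ∈ interior Ω, lam + ⟪(2 : ℝ) • b, x⟫ = 0 := fun x hx => by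
    have := eq_zero_of_eqOn_frontier_of_apply_add_smul hΩbdd hx hu
      (f := fun y => ⟪conformalKillingField a b lam A y, u⟫) (fun y hy => by simp [hbdry y hy])
      (inner_conformalKillingField_add_smul a b lam A x hAu hbu)
    simpa [hu, real_inner_smul_left] using this
  obtain ⟨hb, rfl⟩ := eq_zero_of_forall_add_inner_eq_zero isOpen_interior hx₀ hfactor
  obtain rfl : b = 0 := by simpa using hb
  obtain rfl : A = 0 := LinearMap.ext fun v => by
    rcases eq_or_ne v 0 with rfl | hv
    · simp
    refine eq_zero_of_eqOn_frontier_of_apply_add_smul hΩbdd hx₀ hv hbdry (c := a + A x₀)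
      fun t => ?_
    simp [conformalKillingField, add_assoc]
  obtain ⟨t, -, ht⟩ := exists_pos_add_smul_mem_frontier hΩbdd hx₀ hu
  simpa [conformalKillingField] using hbdry _ ht
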